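/- arXiv:1803.02496 — 3 statements merged into one kernel-verified Lean document; each statement's English description precedes it below -/
import Mathlib

section
/- The operator Q defined by the given kernel is the orthogonal projector onto completely traceless rank-3 tensors: Q² = Q, Q^⊤ = Q, and for all T, (QT)_{aab} = (QT)_{aba} = (QT)_{baa} = 0 (summation over a), while QT = T whenever T is traceless. -/
abbrev Tens (N : ℕ) := Fin N → Fin N → Fin N → ℝ

noncomputable def ip {N : ℕ} (T U : Tens N) : ℝ := ∑ a, ∑ b, ∑ c, T a b c * U a b c

noncomputable def kd {N : ℕ} (i j : Fin N) : ℝ := if i = j then 1 else 0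

/-- Kernel of the orthogonal projector onto completely traceless rank-3 tensors. -/
noncomputable def Qker (N : ℕ) (a1 a2 a3 b1 b2 b3 : Fin N) : ℝ :=
  kd a1 b1 * kd a2 b2 * kd a3 b3
  - ((N : ℝ)^2 + N - 2)⁻¹ *
    ( kd a1 a2 * (((N : ℝ)+1) * kd a3 b3 * kd b1 b2 - kd a3 b2 * kd b1 b3 - kd a3 b1 * kd b2 b3)
    + kd a1 a3 * (-(kd a2 b3 * kd b1 b2) + ((N : ℝ)+1) * kd a2 b2 * kd b1 b3 - kd a2 b1 * kd b2 b3)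
    + kd a2 a3 * (-(kd a1 b3 * kd b1 b2) - kd a1 b2 * kd b1 b3 + ((N : ℝ)+1) * kd a1 b1 * kd b2 b3))

noncomputable def Qmap (N : ℕ) : Tens N →ₗ[ℝ] Tens N where
  toFun T := fun a1 a2 a3 => ∑ b1, ∑ b2, ∑ b3, Qker N a1 a2 a3 b1 b2 b3 * T b1 b2 b3
  map_add' T U := by
    funext a1 a2 a3
    simp [Pi.add_apply, mul_add, Finset.sum_add_distrib]
  map_smul' c T := by
    funext a1 a2 a3
    simp only [Pi.smul_apply, smul_eq_mul, Finset.mul_sum]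
    refine Finset.sum_congr rfl fun b1 _ => Finset.sum_congr rfl fun b2 _ =>
      Finset.sum_congr rfl fun b3 _ => by simp only [RingHom.id_apply]; ring

/-- A rank-3 tensor is completely traceless if all three of its traces vanish. -/
def Traceless {N : ℕ} (T : Tens N) : Prop :=
  ∀ b : Fin N, (∑ a, T a a b = 0) ∧ (∑ a, T a b a = 0) ∧ (∑ a, T b a a = 0)

/-!
Write `tr T = (tr₁₂ T, tr₁₃ T, tr₂₃ T)` for the three traces of `T` and
`Δ(u, v, w) = δ₁₂ u₃ + δ₁₃ v₂ + δ₂₃ w₁`. Then `Δ` is the adjoint of `tr` for `ip`, and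
`tr ∘ Δ` acts on the three trace vectors as the matrix `G = (N - 1) I + J` (`J` the all-ones `3 × 3`
matrix), whose inverse is `((N + 2) I - J) / ((N - 1) (N + 2))`. `Qker` is the integral kernel
of `I - Δ G⁻¹ tr = I - tr* (tr tr*)⁻¹ tr`, the orthogonal projector onto `ker tr`.
-/

section

variable {N : ℕ}

noncomputable def trace12 : Tens N →ₗ[ℝ] Fin N → ℝ where
  toFun T b := ∑ a, T a a b
  map_add' T U := by funext b; simp [Finset.sum_add_distrib]
  map_smul' c T := by funext b; simp [Finset.mul_sum]

noncomputable def trace13 : Tens N →ₗ[ℝ] Fin N → ℝ where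
  toFun T b := ∑ a, T a b a
  map_add' T U := by funext b; simp [Finset.sum_add_distrib]
  map_smul' c T := by funext b; simp [Finset.mul_sum]

noncomputable def trace23 : Tens N →ₗ[ℝ] Fin N → ℝ where
  toFun T b := ∑ a, T b a a
  map_add' T U := by funext b; simp [Finset.sum_add_distrib]
  map_smul' c T := by funext b; simp [Finset.mul_sum]

theorem traceless_iff {T : Tens N} :
    Traceless T ↔ trace12 T = 0 ∧ trace13 T = 0 ∧ trace23 T = 0 := by
  simp only [Traceless, funext_iff, forall_and]
  rfl

theorem ip_comm (T U : Tens N) : ip T U = ip U T := by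
  simp only [ip, mul_comm]

theorem ip_sub_left (T T' U : Tens N) : ip (T - T') U = ip T U - ip T' U := by
  simp only [ip, Pi.sub_apply, sub_mul, Finset.sum_sub_distrib]

theorem ip_smul_left (c : ℝ) (T U : Tens N) : ip (c • T) U = c * ip T U := by
  simp only [ip, Pi.smul_apply, smul_eq_mul, mul_assoc, Finset.mul_sum]

noncomputable def deltaEmbed (u v w : Fin N → ℝ) : Tens N :=
  fun a1 a2 a3 => kd a1 a2 * u a3 + kd a1 a3 * v a2 + kd a2 a3 * w a1

@[simp]
theorem deltaEmbed_zero : deltaEmbed (0 : Fin N → ℝ) 0 0 = 0 := by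
  funext a1 a2 a3
  simp [deltaEmbed]

theorem trace12_deltaEmbed (u v w : Fin N → ℝ) :
    trace12 (deltaEmbed u v w) = (N : ℝ) • u + v + w := by
  funext b
  simp [trace12, deltaEmbed, kd, Finset.sum_add_distrib]

theorem trace13_deltaEmbed (u v w : Fin N → ℝ) :
    trace13 (deltaEmbed u v w) = u + (N : ℝ) • v + w := by
  funext b
  simp [trace13, deltaEmbed, kd, Finset.sum_add_distrib]

theorem trace23_deltaEmbed (u v w : Fin N → ℝ) :
    trace23 (deltaEmbed u v w) = u + v + (N : ℝ) • w := by
  funext b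
  simp [trace23, deltaEmbed, kd, Finset.sum_add_distrib]

theorem ip_deltaEmbed (u v w : Fin N → ℝ) (U : Tens N) :
    ip (deltaEmbed u v w) U = u ⬝ᵥ trace12 U + v ⬝ᵥ trace13 U + w ⬝ᵥ trace23 U := by
  simp only [ip, deltaEmbed, kd, ite_mul, one_mul, zero_mul, add_mul, Finset.sum_add_distrib,
    Finset.sum_ite_irrel, Finset.sum_const_zero, Finset.sum_ite_eq, Finset.mem_univ, ↓reduceIte,
    dotProduct, trace12, trace13, trace23, LinearMap.coe_mk, AddHom.coe_mk, Finset.mul_sum]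
  congr 1
  congr 1 <;> exact Finset.sum_comm

/-- `Δ (M (tr T))` with `M = (N + 2) I - J = (N - 1) (N + 2) G⁻¹`. -/
noncomputable def traceCorrection (T : Tens N) : Tens N :=
  deltaEmbed (((N : ℝ) + 1) • trace12 T - trace13 T - trace23 T)
    (-trace12 T + ((N : ℝ) + 1) • trace13 T - trace23 T)
    (-trace12 T - trace13 T + ((N : ℝ) + 1) • trace23 T)

theorem Qmap_eq (T : Tens N) :
    Qmap N T = T - ((N : ℝ) ^ 2 + N - 2)⁻¹ • traceCorrection T := by
  funext a1 a2 a3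
  simp only [Qmap, Qker, LinearMap.coe_mk, AddHom.coe_mk, sub_mul, add_mul,
    Finset.sum_sub_distrib, Finset.sum_add_distrib, mul_assoc, ← Finset.mul_sum]
  simp only [kd, ite_mul, mul_ite, one_mul, zero_mul, mul_one, mul_zero, neg_mul,
    Finset.sum_ite_eq, Finset.sum_ite_irrel, Finset.sum_const_zero, Finset.sum_neg_distrib,
    Finset.mem_univ, ↓reduceIte, traceCorrection, deltaEmbed, trace12, trace13, trace23,
    LinearMap.coe_mk, AddHom.coe_mk, Pi.add_apply, Pi.sub_apply, Pi.neg_apply, Pi.smul_apply,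
    smul_eq_mul]
  split_ifs <;> ring

theorem trace12_traceCorrection (T : Tens N) :
    trace12 (traceCorrection T) = ((N : ℝ) ^ 2 + N - 2) • trace12 T := by
  rw [traceCorrection, trace12_deltaEmbed]
  module

theorem trace13_traceCorrection (T : Tens N) :
    trace13 (traceCorrection T) = ((N : ℝ) ^ 2 + N - 2) • trace13 T := by
  rw [traceCorrection, trace13_deltaEmbed]
  module

theorem trace23_traceCorrection (T : Tens N) :
    trace23 (traceCorrection T) = ((N : ℝ) ^ 2 + N - 2) • trace23 T := by
  rw [traceCorrection, trace23_deltaEmbed]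
  module

theorem ip_traceCorrection (T U : Tens N) :
    ip (traceCorrection T) U = ip T (traceCorrection U) := by
  rw [ip_comm T, traceCorrection, traceCorrection, ip_deltaEmbed, ip_deltaEmbed]
  simp only [dotProduct, ← Finset.sum_add_distrib]
  refine Finset.sum_congr rfl fun x _ => ?_
  simp only [Pi.add_apply, Pi.sub_apply, Pi.neg_apply, Pi.smul_apply, smul_eq_mul]
  ring

theorem traceCorrection_of_traceless {T : Tens N} (hT : Traceless T) : traceCorrection T = 0 := by
  obtain ⟨h12, h13, h23⟩ := traceless_iff.1 hT
  simp [traceCorrection, h12, h13, h23]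

theorem cast_sq_add_sub_two_ne_zero (hN : N ≠ 1) : (N : ℝ) ^ 2 + N - 2 ≠ 0 := by
  have hN' : (N : ℝ) - 1 ≠ 0 := sub_ne_zero.2 (by exact_mod_cast hN)
  have : (N : ℝ) ^ 2 + N - 2 = ((N : ℝ) - 1) * (N + 2) := by ring
  rw [this]
  exact mul_ne_zero hN' (by positivity)

theorem traceless_Qmap (hN : N ≠ 1) (T : Tens N) : Traceless (Qmap N T) := by
  have hc := inv_mul_cancel₀ (cast_sq_add_sub_two_ne_zero hN)
  simp only [traceless_iff, Qmap_eq, map_sub, map_smul, trace12_traceCorrection,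
    trace13_traceCorrection, trace23_traceCorrection, smul_smul, hc, one_smul, sub_self,
    and_self]

theorem Qmap_of_traceless {T : Tens N} (hT : Traceless T) : Qmap N T = T := by
  rw [Qmap_eq, traceCorrection_of_traceless hT, smul_zero, sub_zero]

theorem ip_Qmap (T U : Tens N) : ip (Qmap N T) U = ip T (Qmap N U) := by
  rw [Qmap_eq, Qmap_eq, ip_sub_left, ip_smul_left, ip_traceCorrection,
    ip_comm T (U - _), ip_sub_left, ip_smul_left, ip_comm U, ip_comm (traceCorrection U)]

end

theorem Qmap_traceless_projector (N : ℕ) (hN : 2 ≤ N) :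
    (Qmap N ∘ₗ Qmap N = Qmap N) ∧
    (∀ T U : Tens N, ip (Qmap N T) U = ip T (Qmap N U)) ∧
    (∀ T : Tens N, Traceless (Qmap N T)) ∧
    (∀ T : Tens N, Traceless T → Qmap N T = T) := by
  have hN1 : N ≠ 1 := by omega
  exact ⟨LinearMap.ext fun T => Qmap_of_traceless (traceless_Qmap hN1 T), ip_Qmap,
    traceless_Qmap hN1, fun _ => Qmap_of_traceless⟩
end

section
/- The projectors P̃ and Q commute: Q P̃ Q = P̃ Q = Q P̃. -/
/-- The mixed-symmetry Young symmetrizer for the tableau with rows {1,2} and {3}. -/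
noncomputable def Smap (N : ℕ) : Tens N →ₗ[ℝ] Tens N where
  toFun T := fun a1 a2 a3 =>
    (1/3 : ℝ) * (T a1 a2 a3 + T a2 a1 a3 - T a3 a2 a1 - T a2 a3 a1)
  map_add' T U := by funext a1 a2 a3; simp [Pi.add_apply]; ring
  map_smul' c T := by funext a1 a2 a3; simp [Pi.smul_apply, smul_eq_mul]; ring

lemma kd_comm {N : ℕ} (i j : Fin N) : kd i j = kd j i := by
  simp [kd, eq_comm]

lemma sum_kd_mul {N : ℕ} (c : Fin N) (f : Fin N → ℝ) : ∑ b, kd b c * f b = f c := by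
  simp [kd, ite_mul]

lemma sum_kd_self (N : ℕ) : ∑ b : Fin N, kd b b = N := by
  simp [kd]

noncomputable def contract12 {N : ℕ} (T : Tens N) (c : Fin N) : ℝ := ∑ b, T b b c
noncomputable def contract13 {N : ℕ} (T : Tens N) (c : Fin N) : ℝ := ∑ b, T b c b
noncomputable def contract23 {N : ℕ} (T : Tens N) (c : Fin N) : ℝ := ∑ b, T c b b

lemma Qmap_apply {N : ℕ} (T : Tens N) (a1 a2 a3 : Fin N) :
    Qmap N T a1 a2 a3
    = T a1 a2 a3 - ((N : ℝ)^2 + N - 2)⁻¹ *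
      ( kd a1 a2 * (((N : ℝ)+1) * contract12 T a3 - contract13 T a3 - contract23 T a3)
      + kd a1 a3 * (-(contract12 T a2) + ((N : ℝ)+1) * contract13 T a2 - contract23 T a2)
      + kd a2 a3 * (-(contract12 T a1) - contract13 T a1 + ((N : ℝ)+1) * contract23 T a1)) := by
  show ∑ b1, ∑ b2, ∑ b3, Qker N a1 a2 a3 b1 b2 b3 * T b1 b2 b3 = _
  simp only [Qker, add_mul, mul_assoc, neg_mul, sub_eq_add_neg,
    Finset.sum_add_distrib, Finset.sum_neg_distrib, ← Finset.mul_sum]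
  simp [kd, ite_mul, mul_ite, contract12, contract13, contract23, Finset.mul_sum]

def swap12 (N : ℕ) : Tens N →ₗ[ℝ] Tens N where
  toFun T a1 a2 a3 := T a2 a1 a3
  map_add' _ _ := rfl
  map_smul' _ _ := rfl

def swap13 (N : ℕ) : Tens N →ₗ[ℝ] Tens N where
  toFun T a1 a2 a3 := T a3 a2 a1
  map_add' _ _ := rfl
  map_smul' _ _ := rfl

lemma Smap_eq (N : ℕ) : Smap N = (1/3 : ℝ) • ((1 - swap13 N) * (1 + swap12 N)) := by
  refine LinearMap.ext fun T => funext fun a1 => funext fun a2 => funext fun a3 => ?_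
  show (1/3 : ℝ) * _ = (1/3 : ℝ) * (T a1 a2 a3 + T a2 a1 a3 - (T a3 a2 a1 + T a2 a3 a1))
  ring

lemma commute_Qmap_swap12 (N : ℕ) : Commute (Qmap N) (swap12 N) := by
  refine LinearMap.ext fun T => funext fun a1 => funext fun a2 => funext fun a3 => ?_
  show Qmap N (swap12 N T) a1 a2 a3 = Qmap N T a2 a1 a3
  have h12 : contract12 (swap12 N T) = contract12 T := rfl
  have h13 : contract13 (swap12 N T) = contract23 T := rfl
  have h23 : contract23 (swap12 N T) = contract13 T := rfl
  rw [Qmap_apply, Qmap_apply, h12, h13, h23, kd_comm a2 a1]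
  simp only [swap12, LinearMap.coe_mk, AddHom.coe_mk]
  ring

lemma commute_Qmap_swap13 (N : ℕ) : Commute (Qmap N) (swap13 N) := by
  refine LinearMap.ext fun T => funext fun a1 => funext fun a2 => funext fun a3 => ?_
  show Qmap N (swap13 N T) a1 a2 a3 = Qmap N T a3 a2 a1
  have h12 : contract12 (swap13 N T) = contract23 T := rfl
  have h13 : contract13 (swap13 N T) = contract13 T := rfl
  have h23 : contract23 (swap13 N T) = contract12 T := rfl
  rw [Qmap_apply, Qmap_apply, h12, h13, h23, kd_comm a2 a1, kd_comm a3 a1, kd_comm a3 a2]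
  simp only [swap13, LinearMap.coe_mk, AddHom.coe_mk]
  ring

lemma commute_Qmap_Smap (N : ℕ) : Commute (Qmap N) (Smap N) := by
  have h12 := commute_Qmap_swap12 N
  have h13 := commute_Qmap_swap13 N
  rw [Smap_eq]
  exact (((Commute.one_right _).sub_right h13).mul_right
    ((Commute.one_right _).add_right h12)).smul_right _

lemma contract12_Qmap {N : ℕ} (hN : 2 ≤ N) (T : Tens N) (c : Fin N) :
    contract12 (Qmap N T) c = 0 := by
  have hD : ((N : ℝ)^2 + N - 2) ≠ 0 := by
    have : (2 : ℝ) ≤ N := by exact_mod_cast hN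
    nlinarith
  have hT : ∑ b, T b b c = contract12 T c := rfl
  rw [contract12]
  simp only [Qmap_apply, hT, mul_add, add_mul, Finset.sum_add_distrib, Finset.sum_sub_distrib,
    ← Finset.mul_sum, ← Finset.sum_mul, sum_kd_self, sum_kd_mul]
  linear_combination -inv_mul_cancel_left₀ hD (contract12 T c)

lemma contract23_Qmap {N : ℕ} (hN : 2 ≤ N) (T : Tens N) (c : Fin N) :
    contract23 (Qmap N T) c = 0 := by
  have h := LinearMap.congr_fun (commute_Qmap_swap13 N).eq T
  calc contract23 (Qmap N T) c = contract12 (swap13 N (Qmap N T)) c := rfl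
    _ = contract12 (Qmap N (swap13 N T)) c := congrArg (contract12 · c) h.symm
    _ = 0 := contract12_Qmap hN _ c

lemma contract13_Qmap {N : ℕ} (hN : 2 ≤ N) (T : Tens N) (c : Fin N) :
    contract13 (Qmap N T) c = 0 := by
  have h := LinearMap.congr_fun
    ((commute_Qmap_swap13 N).mul_right (commute_Qmap_swap12 N)).eq T
  calc contract13 (Qmap N T) c = contract12 (swap13 N (swap12 N (Qmap N T))) c := rfl
    _ = contract12 (Qmap N (swap13 N (swap12 N T))) c := congrArg (contract12 · c) h.symm
    _ = 0 := contract12_Qmap hN _ c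

lemma isIdempotentElem_Qmap {N : ℕ} (hN : 2 ≤ N) : IsIdempotentElem (Qmap N) := by
  refine LinearMap.ext fun T => funext fun a1 => funext fun a2 => funext fun a3 => ?_
  show Qmap N (Qmap N T) a1 a2 a3 = Qmap N T a1 a2 a3
  simp [Qmap_apply (Qmap N T), contract12_Qmap hN, contract13_Qmap hN, contract23_Qmap hN]

noncomputable def unitTens {N : ℕ} (x y z : Fin N) : Tens N := fun a b c => kd x a * kd y b * kd z c

lemma ip_unitTens {N : ℕ} (x y z : Fin N) (U : Tens N) : ip (unitTens x y z) U = U x y z := by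
  simp [ip, unitTens, kd, ite_mul]

lemma ip_Smap_unitTens {N : ℕ} (x y z : Fin N) (U : Tens N) :
    ip (Smap N (unitTens x y z)) U
      = ((1/3 : ℝ) • ((1 + swap12 N) * (1 - swap13 N))) U x y z := by
  show _ = (1/3 : ℝ) * (U x y z - U z y x + (U y x z - U z x y))
  simp only [ip, Smap, LinearMap.coe_mk, AddHom.coe_mk, unitTens, mul_comm ((1:ℝ)/3),
    sub_mul, add_mul, Finset.sum_add_distrib, Finset.sum_sub_distrib]
  simp only [kd, mul_ite, ite_mul, mul_one, mul_zero, one_mul, zero_mul, Finset.sum_ite_eq,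
    Finset.mem_univ, ↓reduceIte, Finset.sum_ite_irrel, Finset.sum_const_zero]
  ring

lemma eq_of_ip_Smap {N : ℕ} (St : Tens N →ₗ[ℝ] Tens N)
    (hSt : ∀ T U : Tens N, ip (Smap N T) U = ip T (St U)) :
    St = (1/3 : ℝ) • ((1 + swap12 N) * (1 - swap13 N)) := by
  refine LinearMap.ext fun U => funext fun x => funext fun y => funext fun z => ?_
  rw [← ip_unitTens x y z (St U), ← hSt, ip_Smap_unitTens]

theorem Ptilde_Qmap_commute (N : ℕ) (hN : 2 ≤ N) (St : Tens N →ₗ[ℝ] Tens N)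
    (hSt : ∀ T U : Tens N, ip (Smap N T) U = ip T (St U)) :
    Qmap N ∘ₗ ((3/4 : ℝ) • (Smap N ∘ₗ St)) ∘ₗ Qmap N
        = ((3/4 : ℝ) • (Smap N ∘ₗ St)) ∘ₗ Qmap N ∧
    ((3/4 : ℝ) • (Smap N ∘ₗ St)) ∘ₗ Qmap N
        = Qmap N ∘ₗ ((3/4 : ℝ) • (Smap N ∘ₗ St)) := by
  have h12 := commute_Qmap_swap12 N
  have h13 := commute_Qmap_swap13 N
  have hQSt : Commute (Qmap N) St := by
    rw [eq_of_ip_Smap St hSt]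
    exact (((Commute.one_right _).add_right h12).mul_right
      ((Commute.one_right _).sub_right h13)).smul_right _
  have hQP : Commute (Qmap N) ((3/4 : ℝ) • (Smap N ∘ₗ St)) :=
    ((commute_Qmap_Smap N).mul_right hQSt).smul_right _
  refine ⟨?_, hQP.eq.symm⟩
  change Qmap N * (_ * Qmap N) = _ * Qmap N
  rw [← hQP.eq, ← mul_assoc, (isIdempotentElem_Qmap hN).eq]
end

section
/- The operator P := P̃ Q is an orthogonal projector (P² = P, P^⊤ = P) and its kernel is given explicitly by P_{a1 a2 a3, b1 b2 b3} = (1/3)(δ_{a1 b1}δ_{a2 b2}δ_{a3 b3} − δ_{a1 b3}δ_{a2 b2}δ_{a3 b1}) + (1/6)(δ_{a1 b2}δ_{a2 b1}δ_{a3 b3} + δ_{a1 b1}δ_{a2 b3}δ_{a3 b2}) − (1/6)(δ_{a1 b2}δ_{a2 b3}δ_{a3 b1} + δ_{a1 b3}δ_{a2 b1}δ_{a3 b2}) + (2(N−1))^{-1}(δ_{a1 b3}δ_{a2 a3}δ_{b1 b2} + δ_{a1 a2}δ_{a3 b1}δ_{b2 b3}) − (2(N−1))^{-1}(δ_{a1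 b1}δ_{a2 a3}δ_{b2 b3} + δ_{a1 a2}δ_{a3 b3}δ_{b1 b2}). -/
/-- The explicit kernel of the projector P onto traceless mixed-symmetry tensors. -/
noncomputable def Pker (N : ℕ) (a1 a2 a3 b1 b2 b3 : Fin N) : ℝ :=
  (1/3 : ℝ) * (kd a1 b1 * kd a2 b2 * kd a3 b3 - kd a1 b3 * kd a2 b2 * kd a3 b1)
  + (1/6 : ℝ) * (kd a1 b2 * kd a2 b1 * kd a3 b3 + kd a1 b1 * kd a2 b3 * kd a3 b2)
  - (1/6 : ℝ) * (kd a1 b2 * kd a2 b3 * kd a3 b1 + kd a1 b3 * kd a2 b1 * kd a3 b2)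
  + (2 * ((N : ℝ) - 1))⁻¹ * (kd a1 b3 * kd a2 a3 * kd b1 b2 + kd a1 a2 * kd a3 b1 * kd b2 b3)
  - (2 * ((N : ℝ) - 1))⁻¹ * (kd a1 b1 * kd a2 a3 * kd b2 b3 + kd a1 a2 * kd a3 b3 * kd b1 b2)

noncomputable def Pmap (N : ℕ) : Tens N →ₗ[ℝ] Tens N where
  toFun T := fun a1 a2 a3 => ∑ b1, ∑ b2, ∑ b3, Pker N a1 a2 a3 b1 b2 b3 * T b1 b2 b3
  map_add' T U := by
    funext a1 a2 a3
    simp [Pi.add_apply, mul_add, Finset.sum_add_distrib]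
  map_smul' c T := by
    funext a1 a2 a3
    simp only [Pi.smul_apply, smul_eq_mul, Finset.mul_sum]
    refine Finset.sum_congr rfl fun b1 _ => Finset.sum_congr rfl fun b2 _ =>
      Finset.sum_congr rfl fun b3 _ => by simp only [RingHom.id_apply]; ring

lemma ite_eq_kd_mul {N : ℕ} (i j : Fin N) (x : ℝ) : (if i = j then x else 0) = kd i j * x := by
  by_cases h : i = j <;> simp [kd, h]

lemma sum3_sum3_comm {α M : Type*} [Fintype α] [AddCommMonoid M]
    (F : α → α → α → α → α → α → M) :
    ∑ a1, ∑ a2, ∑ a3, ∑ b1, ∑ b2, ∑ b3, F a1 a2 a3 b1 b2 b3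
      = ∑ b1, ∑ b2, ∑ b3, ∑ a1, ∑ a2, ∑ a3, F a1 a2 a3 b1 b2 b3 := by
  have sum3_eq_sum_prod : ∀ G : α → α → α → M,
      ∑ x, ∑ y, ∑ z, G x y z = ∑ p : α × α × α, G p.1 p.2.1 p.2.2 := fun G => by
    simp only [Fintype.sum_prod_type]
  simp only [sum3_eq_sum_prod]
  exact Finset.sum_comm

section Kernels

variable {N : ℕ}

def applyKernel (K : Fin N → Fin N → Fin N → Fin N → Fin N → Fin N → ℝ) (T : Tens N) : Tens N :=
  fun a1 a2 a3 => ∑ b1, ∑ b2, ∑ b3, K a1 a2 a3 b1 b2 b3 * T b1 b2 b3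

lemma applyKernel_applyKernel (K L : Fin N → Fin N → Fin N → Fin N → Fin N → Fin N → ℝ)
    (T : Tens N) :
    applyKernel K (applyKernel L T)
      = applyKernel (fun a1 a2 a3 c1 c2 c3 =>
          ∑ b1, ∑ b2, ∑ b3, K a1 a2 a3 b1 b2 b3 * L b1 b2 b3 c1 c2 c3) T := by
  funext a1 a2 a3
  simp only [applyKernel, Finset.mul_sum, Finset.sum_mul, mul_assoc]
  exact sum3_sum3_comm _

lemma ip_applyKernel (K : Fin N → Fin N → Fin N → Fin N → Fin N → Fin N → ℝ) (T U : Tens N) :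
    ip (applyKernel K T) U
      = ip T (applyKernel (fun a1 a2 a3 b1 b2 b3 => K b1 b2 b3 a1 a2 a3) U) := by
  simp only [ip, applyKernel, Finset.mul_sum, Finset.sum_mul]
  rw [sum3_sum3_comm]
  refine Finset.sum_congr rfl fun _ _ => Finset.sum_congr rfl fun _ _ =>
    Finset.sum_congr rfl fun _ _ => Finset.sum_congr rfl fun _ _ =>
    Finset.sum_congr rfl fun _ _ => Finset.sum_congr rfl fun _ _ => by ring

end Kernels

lemma Pmap_eq_applyKernel (N : ℕ) : ⇑(Pmap N) = applyKernel (Pker N) := rfl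

lemma apply_eq_of_ip_Smap {N : ℕ} {St : Tens N →ₗ[ℝ] Tens N}
    (hSt : ∀ T U : Tens N, ip (Smap N T) U = ip T (St U)) (U : Tens N) (x y z : Fin N) :
    St U x y z = (1/3 : ℝ) * (U x y z + U y x z - U z y x - U z x y) := by
  -- pair both sides with the delta tensor concentrated at `(x, y, z)`
  have h := hSt (fun p q r => kd p x * kd q y * kd r z) U
  simp only [ip, Smap, LinearMap.coe_mk, AddHom.coe_mk, kd, mul_ite, ite_mul, one_mul, mul_one,
    zero_mul, mul_zero, mul_add, add_mul, mul_sub, sub_mul, Finset.sum_add_distrib,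
    Finset.sum_sub_distrib, Finset.sum_ite_eq', Finset.sum_ite_irrel, Finset.mem_univ, if_true,
    Finset.sum_const_zero] at h
  linarith

lemma smul_Smap_comp_apply_of_ip_Smap {N : ℕ} {St : Tens N →ₗ[ℝ] Tens N}
    (hSt : ∀ T U : Tens N, ip (Smap N T) U = ip T (St U)) (W : Tens N) (a1 a2 a3 : Fin N) :
    ((3/4 : ℝ) • (Smap N ∘ₗ St)) W a1 a2 a3
      = (1/6 : ℝ) * (2 * W a1 a2 a3 + W a2 a1 a3 + W a1 a3 a2
          - 2 * W a3 a2 a1 - W a3 a1 a2 - W a2 a3 a1) := by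
  simp only [LinearMap.smul_apply, LinearMap.comp_apply, Pi.smul_apply, smul_eq_mul, Smap,
    LinearMap.coe_mk, AddHom.coe_mk, apply_eq_of_ip_Smap hSt]
  ring

lemma Pker_eq_symmetrized_Qker {N : ℕ} (hN : 2 ≤ N) (a1 a2 a3 b1 b2 b3 : Fin N) :
    Pker N a1 a2 a3 b1 b2 b3
      = (1/6 : ℝ) * (2 * Qker N a1 a2 a3 b1 b2 b3 + Qker N a2 a1 a3 b1 b2 b3
          + Qker N a1 a3 a2 b1 b2 b3 - 2 * Qker N a3 a2 a1 b1 b2 b3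
          - Qker N a3 a1 a2 b1 b2 b3 - Qker N a2 a3 a1 b1 b2 b3) := by
  have hN' : (2 : ℝ) ≤ N := by exact_mod_cast hN
  have hN1 : (N : ℝ) - 1 ≠ 0 := by linarith
  have hN2 : (N : ℝ) + 2 ≠ 0 := by linarith
  simp only [Qker, Pker, kd_comm a2 a1, kd_comm a3 a1, kd_comm a3 a2]
  rw [show (N : ℝ) ^ 2 + N - 2 = (N - 1) * (N + 2) by ring]
  field_simp
  ring

lemma smul_Smap_comp_comp_Qmap_eq_Pmap {N : ℕ} (hN : 2 ≤ N) {St : Tens N →ₗ[ℝ] Tens N}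
    (hSt : ∀ T U : Tens N, ip (Smap N T) U = ip T (St U)) :
    ((3/4 : ℝ) • (Smap N ∘ₗ St)) ∘ₗ Qmap N = Pmap N := by
  refine LinearMap.ext fun T => funext fun a1 => funext fun a2 => funext fun a3 => ?_
  rw [LinearMap.comp_apply, smul_Smap_comp_apply_of_ip_Smap hSt, Pmap_eq_applyKernel]
  simp only [applyKernel, Pker_eq_symmetrized_Qker hN, Qmap, LinearMap.coe_mk, AddHom.coe_mk,
    add_mul, sub_mul, mul_assoc, Finset.sum_add_distrib, Finset.sum_sub_distrib,
    ← Finset.mul_sum]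

lemma Pker_symm {N : ℕ} (a1 a2 a3 b1 b2 b3 : Fin N) :
    Pker N a1 a2 a3 b1 b2 b3 = Pker N b1 b2 b3 a1 a2 a3 := by
  simp only [Pker, kd_comm b1 a1, kd_comm b1 a2, kd_comm b1 a3, kd_comm b2 a1, kd_comm b2 a2,
    kd_comm b2 a3, kd_comm b3 a1, kd_comm b3 a2, kd_comm b3 a3]
  ring

lemma Pker_mul_Pker {N : ℕ} (hN : 2 ≤ N) (a1 a2 a3 c1 c2 c3 : Fin N) :
    ∑ b1, ∑ b2, ∑ b3, Pker N a1 a2 a3 b1 b2 b3 * Pker N b1 b2 b3 c1 c2 c3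
      = Pker N a1 a2 a3 c1 c2 c3 := by
  have hN' : (2 : ℝ) * N - 2 ≠ 0 := by
    have : (2 : ℝ) ≤ N := by exact_mod_cast hN
    linarith
  simp only [Pker, kd, mul_ite, ite_mul, mul_one, mul_zero, zero_mul, mul_add, add_mul, mul_sub,
    sub_mul, Finset.sum_add_distrib, Finset.sum_sub_distrib, Finset.sum_ite_eq,
    Finset.sum_ite_eq', Finset.sum_ite_irrel, Finset.sum_const, Finset.mem_univ, if_true,
    Finset.card_univ, Fintype.card_fin, smul_zero, nsmul_eq_mul]
  simp only [ite_eq_kd_mul, kd_comm c2 c1, kd_comm c3 c2]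
  field_simp
  ring

lemma Pmap_comp_Pmap {N : ℕ} (hN : 2 ≤ N) : Pmap N ∘ₗ Pmap N = Pmap N := by
  refine LinearMap.ext fun T => ?_
  rw [LinearMap.comp_apply, Pmap_eq_applyKernel, applyKernel_applyKernel]
  simp only [Pker_mul_Pker hN]

lemma ip_Pmap {N : ℕ} (T U : Tens N) : ip (Pmap N T) U = ip T (Pmap N U) := by
  rw [Pmap_eq_applyKernel, ip_applyKernel]
  simp only [← Pker_symm]

theorem P_orthogonal_projector_and_kernel (N : ℕ) (hN : 2 ≤ N) (St : Tens N →ₗ[ℝ] Tens N)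
    (hSt : ∀ T U : Tens N, ip (Smap N T) U = ip T (St U)) :
    (((3/4 : ℝ) • (Smap N ∘ₗ St)) ∘ₗ Qmap N) ∘ₗ (((3/4 : ℝ) • (Smap N ∘ₗ St)) ∘ₗ Qmap N)
        = ((3/4 : ℝ) • (Smap N ∘ₗ St)) ∘ₗ Qmap N ∧
    (∀ T U : Tens N,
      ip ((((3/4 : ℝ) • (Smap N ∘ₗ St)) ∘ₗ Qmap N) T) U
        = ip T ((((3/4 : ℝ) • (Smap N ∘ₗ St)) ∘ₗ Qmap N) U)) ∧
    (∀ (T : Tens N) (a1 a2 a3 : Fin N),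
      (((3/4 : ℝ) • (Smap N ∘ₗ St)) ∘ₗ Qmap N) T a1 a2 a3
        = ∑ b1, ∑ b2, ∑ b3, Pker N a1 a2 a3 b1 b2 b3 * T b1 b2 b3) := by
  rw [smul_Smap_comp_comp_Qmap_eq_Pmap hN hSt]
  exact ⟨Pmap_comp_Pmap hN, ip_Pmap, fun _ _ _ _ => rfl⟩
end
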